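/- For every U ∈ Σ* and every letter X ∈ Σ: Γs(U·X) = Π(Γs(U)·overline(X)), and Γd(U) = Π(Γs(U)). -/

import Mathlib

namespace CInfWords

open scoped Classical

/-- Run-length encoding Δ of a word. -/
def rle : List ℕ → List ℕ
  | [] => []
  | [_] => [1]
  | a :: b :: l =>
    if a = b then
      match rle (b :: l) with
      | [] => [1]
      | c :: r => (c + 1) :: r
    else 1 :: rle (b :: l)

/-- Erase a leading `1`, if any. -/
def trim1 : List ℕ → List ℕ
  | 1 :: l => l
  | l => l

/-- The derivative `D`: the run-length encoding with the first and/or the last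
symbol erased when they are equal to `1`. -/
def D (w : List ℕ) : List ℕ := trim1 ((trim1 (rle w).reverse).reverse)

/-- Words over Σ = {1,2}. -/
def IsWord (w : List ℕ) : Prop := ∀ x ∈ w, x = 1 ∨ x = 2

/-- Words over Σ₀ = {0,1,2}. -/
def IsWord0 (w : List ℕ) : Prop := ∀ x ∈ w, x = 0 ∨ x = 1 ∨ x = 2

/-- Σ₀^{++}: words over Σ₀ that are empty or begin with a nonzero symbol. -/
def Spp (w : List ℕ) : Prop := IsWord0 w ∧ (w = [] ∨ w.headI ≠ 0)

/-- C^∞-words: every iterated derivative is a word over Σ = {1,2}. -/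
def Cinf (w : List ℕ) : Prop := ∀ k, IsWord (D^[k] w)

/-- The height of a C^∞-word: the least k with D^[k] w = ε. -/
noncomputable def height (w : List ℕ) : ℕ := sInf {k | D^[k] w = []}

/-- The root of a C^∞-word of height k > 0: its (k-1)-st derivative. -/
noncomputable def root (w : List ℕ) : List ℕ := D^[height w - 1] w

/-- `v` is a primitive of `w`. -/
def Primitive (v w : List ℕ) : Prop := IsWord v ∧ D v = w

/-- The complement: swap 1's and 2's. -/
def compl (w : List ℕ) : List ℕ := w.map (fun x => 3 - x)

/-- Minimal C^∞-words: every derivative is a shortest primitive of the next one. -/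
def Minimal (w : List ℕ) : Prop :=
  Cinf w ∧ 0 < height w ∧
    ∀ j, j + 2 ≤ height w → ∀ v, Primitive v (D^[j+1] w) → (D^[j] w).length ≤ v.length

/-- Maximal C^∞-words: every derivative is a longest primitive of the next one. -/
def Maximal (w : List ℕ) : Prop :=
  Cinf w ∧ 0 < height w ∧
    ∀ j, j + 2 ≤ height w → ∀ v, Primitive v (D^[j+1] w) → v.length ≤ (D^[j] w).length

def LeftMinimal (w : List ℕ) : Prop := ∃ v, Minimal v ∧ w <+: v
def RightMinimal (w : List ℕ) : Prop := ∃ v, Minimal v ∧ w <:+ v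
def LeftMaximal (w : List ℕ) : Prop := ∃ v, Maximal v ∧ w <+: v
def RightMaximal (w : List ℕ) : Prop := ∃ v, Maximal v ∧ w <:+ v

/-- Single-rooted minimal words. -/
def SRMin (w : List ℕ) : Prop := Minimal w ∧ (root w).length = 1

/-- Double-rooted minimal words. -/
def DRMin (w : List ℕ) : Prop := Minimal w ∧ (root w).length = 2

/-- The left frontier Ψ(w). -/
noncomputable def psi (w : List ℕ) : List ℕ :=
  (List.range (height w)).map fun i =>
    if i = 0 then w.getD 0 0
    else if (D^[i] w).getD 0 0 = 2 ∧ (D^[i-1] w).getD 0 0 ≠ (D^[i-1] w).getD 1 0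
      then 0
    else (D^[i] w).getD 0 0

/-- The single-rooted minimal word with left frontier U (if it exists). -/
noncomputable def srmOf (U : List ℕ) : List ℕ :=
  if h : ∃ w, SRMin w ∧ psi w = U then h.choose else []

/-- The double-rooted minimal word with left frontier U (if it exists). -/
noncomputable def drmOf (U : List ℕ) : List ℕ :=
  if h : ∃ w, DRMin w ∧ psi w = U then h.choose else []

/-- Γs: the right frontier of the single-rooted minimal word with left frontier U. -/
noncomputable def Gs (U : List ℕ) : List ℕ := psi (srmOf U).reverse

/-- Γd: the right frontier of the double-rooted minimal word with left frontier U. -/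
noncomputable def Gd (U : List ℕ) : List ℕ := psi (drmOf U).reverse

/-- Θ = Γs ∘ Γd. -/
noncomputable def Th (U : List ℕ) : List ℕ := Gs (Gd U)

/-- Π = Γd ∘ Γs. -/
noncomputable def Pp (U : List ℕ) : List ℕ := Gd (Gs U)

/-- One step in the graph G: from node U, the edge labeled 1 goes to U·1, the edge
labeled 2 goes to U·2, and the edge labeled 0 goes to Θ(U)·2. -/
noncomputable def step (U : List ℕ) (a : ℕ) : List ℕ :=
  if a = 1 then U ++ [1] else if a = 2 then U ++ [2] else Th U ++ [2]

/-- The endpoint of the path in G starting at the origin ε and labeled by W. -/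
noncomputable def pathEnd (W : List ℕ) : List ℕ := W.foldl step []

/-- W ∈ Σ₀^{++} labels a directed path in G from ε to U. -/
def LabelsPath (W U : List ℕ) : Prop := Spp W ∧ pathEnd W = U

/-- ‖U‖: the number of words in Σ₀^{++} labeling a path in G from ε to U. -/
noncomputable def normG (U : List ℕ) : ℕ := {W | LabelsPath W U}.ncard

/-- |U|: the length of the single-rooted minimal word with left frontier U. -/
noncomputable def len (U : List ℕ) : ℕ := (srmOf U).length

/-- u is the minimal part of w: the first (leftmost-occurring) factor of w that
is a single-rooted minimal word of the same height as w. -/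
def IsMinPart (u w : List ℕ) : Prop :=
  ∃ s t, w = s ++ u ++ t ∧ SRMin u ∧ height u = height w ∧
    ∀ u' s' t', w = s' ++ u' ++ t' → SRMin u' → height u' = height w →
      s.length ≤ s'.length

/-!
The single- (double-) rooted minimal word with left frontier `U` is built from the root `a`
(`a ā`), `a` the last letter of `U`, by taking at each level the shortest primitive that starts
with the prescribed letter of `U`; the shortest primitive of `u` is the word with run lengths `u`,
extended by a run of length one at each end of `u` that carries a `1`. Hence the right frontier
is the sequence of last letters of the levels. `D` commutes with reversal, so the reversal of a
minimal word is minimal and `Γs` is an involution; this gives `Γd = Γd ∘ Γs ∘ Γs = Π ∘ Γs` and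
reduces the first identity to `Γd(Γs(T·c)) = Γs(Γs(T)·c̄)`. By induction on `T`, the two minimal
words with these left frontiers are the reversals of the single-rooted minimal words with left
frontiers `T·c` and `T`, followed by one common word: the shortest primitive of `v.reverse ++ E`
extends the reversed shortest primitive of `v` by a word depending only on `E` and on the first
letter of `v`. So all their last letters agree.
-/

section Words

lemma isWord_nil : IsWord [] := by simp [IsWord]

lemma isWord_cons {a : ℕ} {l : List ℕ} : IsWord (a :: l) ↔ (a = 1 ∨ a = 2) ∧ IsWord l := by
  simp [IsWord]

lemma isWord_singleton {a : ℕ} : IsWord [a] ↔ a = 1 ∨ a = 2 := by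
  simp [IsWord]

lemma isWord_append {l₁ l₂ : List ℕ} : IsWord (l₁ ++ l₂) ↔ IsWord l₁ ∧ IsWord l₂ := by
  simp only [IsWord, List.mem_append, or_imp, forall_and]

lemma IsWord.reverse {l : List ℕ} (h : IsWord l) : IsWord l.reverse :=
  fun x hx => h x (List.mem_reverse.1 hx)

lemma IsWord.drop {l : List ℕ} (h : IsWord l) (n : ℕ) : IsWord (l.drop n) :=
  fun x hx => h x (List.mem_of_mem_drop hx)

lemma IsWord.tail {l : List ℕ} (h : IsWord l) : IsWord l.tail :=
  fun x hx => h x (List.mem_of_mem_tail hx)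

lemma IsWord.headI_mem {l : List ℕ} (h : IsWord l) (hne : l ≠ []) :
    l.headI = 1 ∨ l.headI = 2 := by
  obtain ⟨a, t, rfl⟩ := List.exists_cons_of_ne_nil hne
  exact h a (by simp)

lemma headI_reverse (l : List ℕ) : l.reverse.headI = l.getLastD 0 := by
  induction l using List.reverseRecOn <;> simp

lemma getLastD_reverse (l : List ℕ) : l.reverse.getLastD 0 = l.headI := by
  simpa using (headI_reverse l.reverse).symm

lemma IsWord.getLastD_mem {l : List ℕ} (h : IsWord l) (hne : l ≠ []) :
    l.getLastD 0 = 1 ∨ l.getLastD 0 = 2 := by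
  rw [← headI_reverse]
  exact h.reverse.headI_mem (by simpa using hne)

lemma headI_append {l₁ l₂ : List ℕ} (h : l₁ ≠ []) : (l₁ ++ l₂).headI = l₁.headI := by
  obtain ⟨a, t, rfl⟩ := List.exists_cons_of_ne_nil h
  rfl

lemma getLastD_append {l₁ l₂ : List ℕ} (h : l₂ ≠ []) :
    (l₁ ++ l₂).getLastD 0 = l₂.getLastD 0 := by
  rw [← headI_reverse, ← headI_reverse, List.reverse_append, headI_append (by simpa using h)]

lemma three_sub_three_sub {x : ℕ} (h : x = 1 ∨ x = 2) : 3 - (3 - x) = x := by omega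

end Words

section Runs

def alternate (n a : ℕ) : ℕ := if n % 2 = 0 then a else 3 - a

lemma alternate_mem {a : ℕ} (h : a = 1 ∨ a = 2) (n : ℕ) :
    alternate n a = 1 ∨ alternate n a = 2 := by
  unfold alternate; split <;> omega

lemma alternate_alternate {a : ℕ} (h : a = 1 ∨ a = 2) (m n : ℕ) :
    alternate m (alternate n a) = alternate (m + n) a := by
  unfold alternate; split_ifs <;> omega

def ofRuns : List ℕ → ℕ → List ℕ
  | [], _ => []
  | n :: L, a => List.replicate n a ++ ofRuns L (3 - a)

lemma ofRuns_append {a : ℕ} (ha : a = 1 ∨ a = 2) (L₁ L₂ : List ℕ) :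
    ofRuns (L₁ ++ L₂) a = ofRuns L₁ a ++ ofRuns L₂ (alternate L₁.length a) := by
  induction L₁ generalizing a with
  | nil => simp [ofRuns, alternate]
  | cons n L ih =>
    have : alternate L.length (3 - a) = alternate (L.length + 1) a := by
      unfold alternate; split_ifs <;> omega
    simp [ofRuns, ih (show 3 - a = 1 ∨ 3 - a = 2 by omega), this]

lemma length_ofRuns (L : List ℕ) (a : ℕ) : (ofRuns L a).length = L.sum := by
  induction L generalizing a <;> simp [ofRuns, *]

lemma isWord_ofRuns (L : List ℕ) {a : ℕ} (h : a = 1 ∨ a = 2) : IsWord (ofRuns L a) := by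
  induction L generalizing a with
  | nil => exact isWord_nil
  | cons n L ih =>
    refine isWord_append.2 ⟨fun x hx => ?_, ih (by omega)⟩
    rw [List.eq_of_mem_replicate hx]
    exact h

lemma ofRuns_cons_of_pos {n : ℕ} (L : List ℕ) (a : ℕ) (hn : 1 ≤ n) :
    ofRuns (n :: L) a = a :: (List.replicate (n - 1) a ++ ofRuns L (3 - a)) := by
  obtain ⟨m, rfl⟩ := Nat.exists_eq_add_of_le' hn
  simp [ofRuns, List.replicate_succ]

lemma reverse_ofRuns {a : ℕ} (ha : a = 1 ∨ a = 2) (L : List ℕ) :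
    (ofRuns L a).reverse = ofRuns L.reverse (alternate (L.length + 1) a) := by
  induction L generalizing a with
  | nil => rfl
  | cons n L ih =>
    have hb := alternate_mem ha (L.length + 2)
    rw [ofRuns, List.reverse_append, ih (by omega), List.reverse_cons, List.length_cons,
      ofRuns_append hb, alternate_alternate ha, List.length_reverse, List.reverse_replicate]
    have h1 : alternate (L.length + 1) (3 - a) = alternate (L.length + 2) a := by
      unfold alternate; split_ifs <;> omega
    have h2 : alternate (L.length + (L.length + 2)) a = a := by
      unfold alternate; split_ifs <;> omega
    simp [ofRuns, h1, h2]

end Runs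

section RunLengthEncoding

lemma exists_rle_cons (a : ℕ) (l : List ℕ) : ∃ c r, rle (a :: l) = c :: r := by
  cases l with
  | nil => exact ⟨1, [], rfl⟩
  | cons b l =>
    rw [rle]
    split
    · split <;> exact ⟨_, _, rfl⟩
    · exact ⟨_, _, rfl⟩

lemma rle_cons_cons (a b : ℕ) (l : List ℕ) {c : ℕ} {r : List ℕ} (h : rle (b :: l) = c :: r) :
    rle (a :: b :: l) = if a = b then (c + 1) :: r else 1 :: c :: r := by
  rw [rle, h]

lemma rle_pos (v : List ℕ) : ∀ n ∈ rle v, 1 ≤ n := by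
  induction v with
  | nil => simp [rle]
  | cons a t ih =>
    cases t with
    | nil => simp [rle]
    | cons b l =>
      obtain ⟨c, r, h⟩ := exists_rle_cons b l
      rw [h] at ih
      rw [rle_cons_cons a b l h]
      split_ifs <;> simp_all

lemma rle_sum (v : List ℕ) : (rle v).sum = v.length := by
  induction v with
  | nil => rfl
  | cons a t ih =>
    cases t with
    | nil => rfl
    | cons b l =>
      obtain ⟨c, r, h⟩ := exists_rle_cons b l
      rw [h] at ih
      rw [rle_cons_cons a b l h]
      split_ifs <;> simp_all <;> omega

lemma rle_replicate_append {n a : ℕ} {w : List ℕ} (hn : 1 ≤ n) (hw : w.headI ≠ a) :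
    rle (List.replicate n a ++ w) = n :: rle w := by
  induction n, hn using Nat.le_induction with
  | base =>
    cases w with
    | nil => rfl
    | cons b t =>
      rw [List.headI_cons] at hw
      rw [List.replicate_one, List.singleton_append, rle, if_neg (Ne.symm hw)]
  | succ m hm ih =>
    obtain ⟨k, rfl⟩ := Nat.exists_eq_add_of_le' hm
    rw [List.replicate_succ, List.cons_append] at ih ⊢
    rw [List.replicate_succ, List.cons_append, rle_cons_cons a a _ ih, if_pos rfl]

lemma rle_ofRuns {a : ℕ} (ha : a = 1 ∨ a = 2) (L : List ℕ) (hL : ∀ n ∈ L, 1 ≤ n) :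
    rle (ofRuns L a) = L := by
  induction L generalizing a with
  | nil => rfl
  | cons n L ih =>
    have hL' : ∀ m ∈ L, 1 ≤ m := fun m hm => hL m (by simp [hm])
    have hhead : (ofRuns L (3 - a)).headI ≠ a := by
      cases L with
      | nil => simp [ofRuns]; omega
      | cons m L => rw [ofRuns_cons_of_pos _ _ (hL' m (by simp))]; simp; omega
    rw [ofRuns, rle_replicate_append (hL n (by simp)) hhead, ih (by omega) hL']

lemma ofRuns_rle {v : List ℕ} (hv : IsWord v) : ofRuns (rle v) v.headI = v := by
  induction v with
  | nil => rfl
  | cons a t ih =>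
    cases t with
    | nil => simp [rle, ofRuns]
    | cons b l =>
      obtain ⟨ha, hbl⟩ := isWord_cons.1 hv
      have hb := (isWord_cons.1 hbl).1
      obtain ⟨c, r, h⟩ := exists_rle_cons b l
      have ih := ih hbl
      rw [h] at ih
      rw [rle_cons_cons a b l h]
      split_ifs with hab
      · subst hab
        simpa [ofRuns, List.replicate_succ] using ih
      · have : 3 - a = b := by omega
        simpa [ofRuns, this] using ih

lemma rle_reverse {v : List ℕ} (hv : IsWord v) : rle v.reverse = (rle v).reverse := by
  rcases eq_or_ne v [] with rfl | hne
  · rfl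
  have ha := hv.headI_mem hne
  conv_lhs => rw [← ofRuns_rle hv, reverse_ofRuns ha]
  exact rle_ofRuns (alternate_mem ha _) _ fun n hn => rle_pos v n (List.mem_reverse.1 hn)

end RunLengthEncoding

section Derivative

lemma trim1_cons_of_ne {x : ℕ} (l : List ℕ) (h : x ≠ 1) : trim1 (x :: l) = x :: l := by
  unfold trim1; split <;> simp_all

lemma trim1_append {l : List ℕ} (h : l ≠ []) (m : List ℕ) : trim1 (l ++ m) = trim1 l ++ m := by
  obtain ⟨x, t, rfl⟩ := List.exists_cons_of_ne_nil h
  by_cases hx : x = 1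
  · subst hx; rfl
  · rw [List.cons_append, trim1_cons_of_ne _ hx, trim1_cons_of_ne _ hx, List.cons_append]

/-- Erasing a leading `1` commutes with erasing a trailing `1`. -/
lemma trim1_comm_trimLast (l : List ℕ) :
    trim1 (trim1 l.reverse).reverse = (trim1 (trim1 l).reverse).reverse := by
  rcases l with _ | ⟨x, t⟩
  · rfl
  rcases eq_or_ne t [] with rfl | ht
  · by_cases hx : x = 1
    · subst hx; rfl
    · simp [trim1_cons_of_ne _ hx]
  have hlast : (trim1 (x :: t).reverse).reverse = x :: (trim1 t.reverse).reverse := by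
    rw [List.reverse_cons, trim1_append (by simpa using ht), List.reverse_append]
    rfl
  rw [hlast]
  by_cases hx : x = 1
  · subst hx; rfl
  · rw [trim1_cons_of_ne _ hx, trim1_cons_of_ne _ hx, hlast]

lemma D_reverse {v : List ℕ} (hv : IsWord v) : D v.reverse = (D v).reverse := by
  simpa [D, rle_reverse hv] using trim1_comm_trimLast (rle v).reverse

end Derivative

section MinimalPrimitive

/-- The run lengths of the shortest primitives of `u`: a run `1` is needed before `u` when
`u` starts with `1`, and after `u` when `u` ends with `1`. -/
def padOnes (u : List ℕ) : List ℕ :=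
  (if u.headI = 1 then [1] else []) ++ u ++ (if u.getLastD 0 = 1 then [1] else [])

def minPrim (u : List ℕ) (a : ℕ) : List ℕ := ofRuns (padOnes u) a

lemma padOnes_pos {u : List ℕ} (hu : IsWord u) : ∀ n ∈ padOnes u, 1 ≤ n := by
  intro n hn
  simp only [padOnes, List.mem_append] at hn
  rcases hn with (hn | hn) | hn
  · split at hn <;> simp_all
  · rcases hu n hn with h | h <;> omega
  · split at hn <;> simp_all

lemma padOnes_reverse (u : List ℕ) : (padOnes u).reverse = padOnes u.reverse := by
  simp only [padOnes, List.reverse_append, headI_reverse, getLastD_reverse, List.append_assoc]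
  split_ifs <;> simp

lemma exists_padOnes_eq_cons {u : List ℕ} (hne : u ≠ []) :
    ∃ L, padOnes u = (if u.headI = 1 then 1 else u.headI) :: L := by
  obtain ⟨x, t, rfl⟩ := List.exists_cons_of_ne_nil hne
  unfold padOnes
  split_ifs <;> simp_all

lemma trim1_padOnes_left {u : List ℕ} (hne : u ≠ []) (m : List ℕ) :
    trim1 ((if u.headI = 1 then [1] else []) ++ u ++ m) = u ++ m := by
  split_ifs with h
  · rfl
  · obtain ⟨x, t, rfl⟩ := List.exists_cons_of_ne_nil hne
    exact trim1_cons_of_ne _ h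

lemma isWord_minPrim (u : List ℕ) {a : ℕ} (ha : a = 1 ∨ a = 2) : IsWord (minPrim u a) :=
  isWord_ofRuns _ ha

lemma length_minPrim (u : List ℕ) (a : ℕ) : (minPrim u a).length = (padOnes u).sum :=
  length_ofRuns _ _

lemma minPrim_eq_cons {u : List ℕ} (hu : IsWord u) (hne : u ≠ []) (a : ℕ) :
    ∃ t, minPrim u a = a :: t := by
  obtain ⟨L, hL⟩ := exists_padOnes_eq_cons hne
  have := padOnes_pos hu
  rw [hL] at this
  rw [minPrim, hL, ofRuns_cons_of_pos _ _ (this _ (by simp))]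
  exact ⟨_, rfl⟩

lemma headI_minPrim {u : List ℕ} (hu : IsWord u) (hne : u ≠ []) (a : ℕ) :
    (minPrim u a).headI = a := by
  obtain ⟨t, ht⟩ := minPrim_eq_cons hu hne a
  rw [ht, List.headI_cons]

lemma minPrim_ne_nil {u : List ℕ} (hu : IsWord u) (hne : u ≠ []) (a : ℕ) : minPrim u a ≠ [] := by
  obtain ⟨t, ht⟩ := minPrim_eq_cons hu hne a
  simp [ht]

lemma minPrim_getD_one {u : List ℕ} (hne : u ≠ []) (h2 : u.headI = 2) (a : ℕ) :
    (minPrim u a).getD 1 0 = a := by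
  obtain ⟨L, hL⟩ := exists_padOnes_eq_cons hne
  rw [h2, if_neg (by omega)] at hL
  simp [minPrim, hL, ofRuns]

lemma D_minPrim {u : List ℕ} (hu : IsWord u) (hne : u ≠ []) {a : ℕ} (ha : a = 1 ∨ a = 2) :
    D (minPrim u a) = u := by
  rw [D, minPrim, rle_ofRuns ha _ (padOnes_pos hu), padOnes_reverse, padOnes,
    trim1_padOnes_left (by simpa using hne), List.reverse_append, List.reverse_reverse,
    getLastD_reverse]
  split_ifs with h <;> simpa [h] using trim1_padOnes_left hne []

lemma trim1_eq_cases {l u : List ℕ} (h : trim1 l = u) (hu : u ≠ []) :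
    l = 1 :: u ∨ (l = u ∧ u.headI ≠ 1) := by
  rcases l with _ | ⟨x, t⟩
  · exact absurd h.symm hu
  · by_cases hx : x = 1
    · subst hx; exact Or.inl (by rw [← h]; rfl)
    · rw [trim1_cons_of_ne _ hx] at h
      exact Or.inr ⟨h, by rw [← h]; exact hx⟩

lemma rle_eq_of_D_eq {v u : List ℕ} (hD : D v = u) (hu : u ≠ []) :
    ∃ p q, rle v = p ++ u ++ q ∧ (p = [] ∧ u.headI ≠ 1 ∨ p = [1]) ∧
      (q = [] ∧ u.getLastD 0 ≠ 1 ∨ q = [1]) := by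
  obtain ⟨p, hmp, hp⟩ : ∃ p, (trim1 (rle v).reverse).reverse = p ++ u ∧
      (p = [] ∧ u.headI ≠ 1 ∨ p = [1]) := by
    rcases trim1_eq_cases hD hu with h | h
    · exact ⟨[1], h, Or.inr rfl⟩
    · exact ⟨[], h.1, Or.inl ⟨rfl, h.2⟩⟩
  have hr := trim1_eq_cases (l := (rle v).reverse) (u := (p ++ u).reverse)
    (by rw [← hmp, List.reverse_reverse]) (by simp [hu])
  rw [headI_reverse, getLastD_append hu] at hr
  rcases hr with h | ⟨h, h'⟩
  · refine ⟨p, [1], ?_, hp, Or.inr rfl⟩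
    rw [← List.reverse_reverse (rle v), h]
    simp
  · refine ⟨p, [], ?_, hp, Or.inl ⟨rfl, h'⟩⟩
    rw [← List.reverse_reverse (rle v), h]
    simp

lemma sum_padOnes_le_length {v u : List ℕ} (hD : D v = u) (hu : u ≠ []) :
    (padOnes u).sum ≤ v.length := by
  obtain ⟨p, q, hr, hp, hq⟩ := rle_eq_of_D_eq hD hu
  rw [← rle_sum, hr, padOnes]
  rcases hp with ⟨rfl, hp⟩ | rfl <;> rcases hq with ⟨rfl, hq⟩ | rfl <;> split_ifs <;> simp <;> omega

lemma eq_minPrim_of_length_le {v u : List ℕ} (hv : IsWord v) (hD : D v = u) (hu : u ≠ [])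
    (hlen : v.length ≤ (padOnes u).sum) : v = minPrim u v.headI := by
  obtain ⟨p, q, hr, hp, hq⟩ := rle_eq_of_D_eq hD hu
  have hrle : rle v = padOnes u := by
    rw [← rle_sum, hr, padOnes] at hlen
    rw [hr, padOnes]
    rcases hp with ⟨rfl, hp⟩ | rfl <;> rcases hq with ⟨rfl, hq⟩ | rfl <;> split_ifs at hlen ⊢ <;>
      simp at hlen ⊢ <;> omega
  rw [minPrim, ← hrle, ofRuns_rle hv]

end MinimalPrimitive

section MinimalWords

lemma height_eq {w : List ℕ} {k : ℕ} (h : D^[k] w = []) (hlt : ∀ j < k, D^[j] w ≠ []) :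
    height w = k :=
  le_antisymm (Nat.sInf_le h)
    (not_lt.1 fun hk => hlt _ hk (Nat.sInf_mem (s := {k | D^[k] w = []}) ⟨k, h⟩))

lemma iterate_D_ne_nil {w : List ℕ} {j : ℕ} (h : j < height w) : D^[j] w ≠ [] :=
  Nat.notMem_of_lt_sInf h

lemma iterate_D_height {w : List ℕ} (h : 0 < height w) : D^[height w] w = [] :=
  Nat.sInf_mem (Nat.nonempty_of_pos_sInf h)

lemma height_nil : height [] = 0 :=
  height_eq rfl fun _ h => absurd h (Nat.not_lt_zero _)

lemma length_psi (w : List ℕ) : (psi w).length = height w := by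
  simp [psi]

lemma psi_nil : psi [] = [] := by
  rw [← List.length_eq_zero_iff, length_psi, height_nil]

lemma height_D {w : List ℕ} (h : 0 < height w) : height (D w) = height w - 1 := by
  apply height_eq
  · rw [← Function.iterate_succ_apply, Nat.succ_eq_add_one, Nat.sub_add_cancel h]
    exact iterate_D_height h
  · intro j hj
    rw [← Function.iterate_succ_apply]
    exact iterate_D_ne_nil (by omega)

lemma root_D {w : List ℕ} (h : 2 ≤ height w) : root (D w) = root w := by
  rw [root, root, height_D (by omega), ← Function.iterate_succ_apply]
  congr 1
  omega

lemma minimal_D {w : List ℕ} (hw : Minimal w) (h : 2 ≤ height w) : Minimal (D w) := by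
  obtain ⟨hc, -, hmin⟩ := hw
  refine ⟨fun k => hc (k + 1), by rw [height_D (by omega)]; omega, fun j hj v hv => ?_⟩
  rw [height_D (by omega)] at hj
  exact hmin (j + 1) (by omega) v hv

lemma Minimal.eq_minPrim {w : List ℕ} (hw : Minimal w) {j : ℕ} (hj : j + 2 ≤ height w) :
    D^[j] w = minPrim (D^[j + 1] w) (D^[j] w).headI := by
  have hD : D (D^[j] w) = D^[j + 1] w := (Function.iterate_succ_apply' D j w).symm
  have hu : D^[j + 1] w ≠ [] := iterate_D_ne_nil (by omega)
  have ha := (hw.1 j).headI_mem (iterate_D_ne_nil (by omega))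
  refine eq_minPrim_of_length_le (hw.1 j) hD hu ?_
  rw [← length_minPrim _ (D^[j] w).headI]
  exact hw.2.2 j hj _ ⟨isWord_minPrim _ ha, D_minPrim (hw.1 (j + 1)) hu ha⟩

lemma getD_zero_eq_headI (l : List ℕ) : l.getD 0 0 = l.headI := by
  cases l <;> rfl

/-- The left frontier of a minimal word has no `0`: whenever a level starts with `2`, the
level above, being a shortest primitive, starts with a run of length two. -/
lemma Minimal.psi_eq {w : List ℕ} (hw : Minimal w) :
    psi w = (List.range (height w)).map fun i => (D^[i] w).headI := by
  refine List.map_congr_left fun i hi => ?_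
  rw [List.mem_range] at hi
  rcases i with _ | i
  · rw [if_pos rfl, getD_zero_eq_headI]
    rfl
  have hu := hw.1 (i + 1)
  have hne := iterate_D_ne_nil hi
  rw [if_neg (Nat.succ_ne_zero i), Nat.add_sub_cancel, getD_zero_eq_headI, getD_zero_eq_headI,
    if_neg]
  rintro ⟨h2, hne'⟩
  apply hne'
  rw [hw.eq_minPrim (j := i) (by omega), minPrim_getD_one hne h2, headI_minPrim hu hne]

lemma iterate_D_reverse {w : List ℕ} (hw : Cinf w) (i : ℕ) :
    D^[i] w.reverse = (D^[i] w).reverse := by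
  induction i with
  | zero => rfl
  | succ i ih =>
    rw [Function.iterate_succ_apply', Function.iterate_succ_apply', ih, D_reverse (hw i)]

lemma height_reverse {w : List ℕ} (hw : Cinf w) : height w.reverse = height w := by
  simp only [height, iterate_D_reverse hw, List.reverse_eq_nil_iff]

lemma root_reverse {w : List ℕ} (hw : Cinf w) : root w.reverse = (root w).reverse := by
  rw [root, root, height_reverse hw, iterate_D_reverse hw]

lemma Minimal.reverse {w : List ℕ} (hw : Minimal w) : Minimal w.reverse := by
  obtain ⟨hc, hpos, hmin⟩ := hw
  refine ⟨fun k => ?_, by rwa [height_reverse hc], fun j hj v hv => ?_⟩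
  · rw [iterate_D_reverse hc]
    exact (hc k).reverse
  · rw [height_reverse hc] at hj
    rw [iterate_D_reverse hc] at hv ⊢
    have hv' : Primitive v.reverse (D^[j + 1] w) := by
      refine ⟨hv.1.reverse, ?_⟩
      rw [D_reverse hv.1, hv.2, List.reverse_reverse]
    simpa using hmin j hj _ hv'

end MinimalWords

section MinWord

def IsRootFamily (ρ : ℕ → List ℕ) (n : ℕ) : Prop :=
  ∀ a, (a = 1 ∨ a = 2) → ∀ x, x = ρ a ↔ IsWord x ∧ D x = [] ∧ x.length = n ∧ x.headI = a

/-- The minimal word with left frontier `U` whose root is `ρ` of the last letter of `U`. -/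
def minWord (ρ : ℕ → List ℕ) : List ℕ → List ℕ
  | [] => []
  | [a] => ρ a
  | a :: b :: T => minPrim (minWord ρ (b :: T)) a

/-- The right frontier of `minWord ρ U`. -/
def lastLetters (ρ : ℕ → List ℕ) : List ℕ → List ℕ
  | [] => []
  | a :: T => (minWord ρ (a :: T)).getLastD 0 :: lastLetters ρ T

variable {ρ : ℕ → List ℕ} {n : ℕ}

lemma minWord_cons (ρ : ℕ → List ℕ) {S : List ℕ} (h : S ≠ []) (a : ℕ) :
    minWord ρ (a :: S) = minPrim (minWord ρ S) a := by
  obtain ⟨b, T, rfl⟩ := List.exists_cons_of_ne_nil h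
  rfl

lemma lastLetters_eq_cons (ρ : ℕ → List ℕ) {U : List ℕ} (h : U ≠ []) :
    lastLetters ρ U = (minWord ρ U).getLastD 0 :: lastLetters ρ U.tail := by
  obtain ⟨a, T, rfl⟩ := List.exists_cons_of_ne_nil h
  rfl

lemma minWord_spec (hρ : IsRootFamily ρ n) {U : List ℕ} (hU : IsWord U) (hne : U ≠ []) :
    IsWord (minWord ρ U) ∧ minWord ρ U ≠ [] ∧ (minWord ρ U).headI = U.headI ∧
      D (minWord ρ U) = minWord ρ U.tail := by
  induction U with
  | nil => exact absurd rfl hne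
  | cons a T ih =>
    obtain ⟨ha, hT⟩ := isWord_cons.1 hU
    rcases eq_or_ne T [] with rfl | hT'
    · obtain ⟨hw, hD, -, hh⟩ := (hρ a ha _).1 rfl
      refine ⟨hw, fun h => ?_, hh, hD⟩
      have : a = 0 := by rw [← hh, show ρ a = [] from h]; rfl
      omega
    · obtain ⟨hw, hne', -, -⟩ := ih hT hT'
      rw [minWord_cons ρ hT']
      exact ⟨isWord_minPrim _ ha, minPrim_ne_nil hw hne' a, headI_minPrim hw hne' a,
        D_minPrim hw hne' ha⟩

lemma iterate_D_minWord (hρ : IsRootFamily ρ n) {U : List ℕ} (hU : IsWord U) (i : ℕ) :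
    D^[i] (minWord ρ U) = minWord ρ (U.drop i) := by
  induction i with
  | zero => rfl
  | succ i ih =>
    rw [Function.iterate_succ_apply', ih, ← List.tail_drop]
    rcases eq_or_ne (U.drop i) [] with h | h
    · rw [h]; rfl
    · exact (minWord_spec hρ (hU.drop i) h).2.2.2

lemma minWord_drop_ne_nil (hρ : IsRootFamily ρ n) {U : List ℕ} (hU : IsWord U) {i : ℕ}
    (hi : i < U.length) : minWord ρ (U.drop i) ≠ [] :=
  (minWord_spec hρ (hU.drop i) (by simpa using hi)).2.1

lemma height_minWord (hρ : IsRootFamily ρ n) {U : List ℕ} (hU : IsWord U) :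
    height (minWord ρ U) = U.length := by
  apply height_eq
  · rw [iterate_D_minWord hρ hU, List.drop_length]
    rfl
  · intro j hj
    rw [iterate_D_minWord hρ hU]
    exact minWord_drop_ne_nil hρ hU hj

lemma minimal_minWord (hρ : IsRootFamily ρ n) {U : List ℕ} (hU : IsWord U) (hne : U ≠ []) :
    Minimal (minWord ρ U) := by
  refine ⟨fun k => ?_, ?_, fun j hj v hv => ?_⟩
  · rw [iterate_D_minWord hρ hU]
    rcases eq_or_ne (U.drop k) [] with h | h
    · rw [h]; exact isWord_nil
    · exact (minWord_spec hρ (hU.drop k) h).1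
  · rw [height_minWord hρ hU]
    exact List.length_pos_iff.2 hne
  · rw [height_minWord hρ hU] at hj
    rw [iterate_D_minWord hρ hU] at hv ⊢
    rw [List.drop_eq_getElem_cons (by omega), minWord_cons ρ (by simp; omega), length_minPrim]
    exact sum_padOnes_le_length hv.2 (minWord_drop_ne_nil hρ hU (by omega))

lemma length_root_minWord (hρ : IsRootFamily ρ n) {U : List ℕ} (hU : IsWord U) (hne : U ≠ []) :
    (root (minWord ρ U)).length = n := by
  obtain ⟨T, a, rfl⟩ := (List.eq_nil_or_concat' U).resolve_left hne
  rw [root, height_minWord hρ hU, iterate_D_minWord hρ hU, List.length_append,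
    List.length_singleton, Nat.add_sub_cancel, List.drop_left' rfl]
  exact ((hρ a (isWord_singleton.1 (isWord_append.1 hU).2) _).1 rfl).2.2.1

lemma map_range_drop_cons (f : List ℕ → ℕ) (a : ℕ) (T : List ℕ) :
    (List.range (a :: T).length).map (fun i => f ((a :: T).drop i)) =
      f (a :: T) :: (List.range T.length).map fun i => f (T.drop i) := by
  simp [List.range_succ_eq_map, Function.comp_def]

lemma psi_minWord (hρ : IsRootFamily ρ n) {U : List ℕ} (hU : IsWord U) (hne : U ≠ []) :
    psi (minWord ρ U) = U := by
  rw [(minimal_minWord hρ hU hne).psi_eq, height_minWord hρ hU]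
  have hhead : ∀ i ∈ List.range U.length, (D^[i] (minWord ρ U)).headI = (U.drop i).headI :=
    fun i hi => by
      rw [iterate_D_minWord hρ hU,
        (minWord_spec hρ (hU.drop i) (by simpa using List.mem_range.1 hi)).2.2.1]
  rw [List.map_congr_left hhead]
  clear hhead hne hU
  induction U with
  | nil => rfl
  | cons a T ih => rw [map_range_drop_cons (fun V => V.headI), ih]; rfl

lemma psi_reverse_minWord (hρ : IsRootFamily ρ n) {U : List ℕ} (hU : IsWord U) (hne : U ≠ []) :
    psi (minWord ρ U).reverse = lastLetters ρ U := by
  have hm := minimal_minWord hρ hU hne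
  rw [hm.reverse.psi_eq, height_reverse hm.1, height_minWord hρ hU]
  have hlast : ∀ i ∈ List.range U.length, (D^[i] (minWord ρ U).reverse).headI =
      (minWord ρ (U.drop i)).getLastD 0 :=
    fun i _ => by rw [iterate_D_reverse hm.1, headI_reverse, iterate_D_minWord hρ hU]
  rw [List.map_congr_left hlast]
  clear hlast hm hne hU
  induction U with
  | nil => rfl
  | cons a T ih => rw [map_range_drop_cons (fun V => (minWord ρ V).getLastD 0), ih]; rfl

lemma Minimal.eq_minWord (hρ : IsRootFamily ρ n) {w : List ℕ} (hw : Minimal w)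
    (hr : (root w).length = n) : w = minWord ρ (psi w) := by
  obtain ⟨k, hk⟩ : ∃ k, height w = k + 1 := Nat.exists_eq_succ_of_ne_zero hw.2.1.ne'
  induction k generalizing w with
  | zero =>
    have hne := iterate_D_ne_nil (w := w) (j := 0) (by omega)
    have hD : D w = [] := by simpa [hk] using iterate_D_height hw.2.1
    have hroot : root w = w := by rw [root, hk]; rfl
    rw [hw.psi_eq, hk]
    exact (hρ _ ((hw.1 0).headI_mem hne) w).2 ⟨hw.1 0, hD, hroot ▸ hr, rfl⟩
  | succ k ih =>
    have h2 : 2 ≤ height w := by omega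
    have hDw := ih (minimal_D hw h2) (by rwa [root_D h2]) (by rw [height_D (by omega), hk]; rfl)
    have hpsi : psi w = w.headI :: psi (D w) := by
      rw [hw.psi_eq, (minimal_D hw h2).psi_eq, height_D (by omega), hk]
      simp [List.range_succ_eq_map, Function.comp_def, Function.iterate_succ_apply]
    have hne : psi (D w) ≠ [] := by
      rw [← List.length_pos_iff, length_psi]
      exact (minimal_D hw h2).2.1
    rw [hpsi, minWord_cons ρ hne, ← hDw]
    exact hw.eq_minPrim (j := 0) h2

lemma isWord_lastLetters (hρ : IsRootFamily ρ n) {U : List ℕ} (hU : IsWord U) :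
    IsWord (lastLetters ρ U) := by
  induction U with
  | nil => exact isWord_nil
  | cons a T ih =>
    obtain ⟨hw, hne, -, -⟩ := minWord_spec hρ hU (List.cons_ne_nil a T)
    exact isWord_cons.2 ⟨hw.getLastD_mem hne, ih (isWord_cons.1 hU).2⟩

end MinWord

section Frontiers

def sroot (a : ℕ) : List ℕ := [a]

def droot (a : ℕ) : List ℕ := [a, 3 - a]

lemma sroot_isRootFamily : IsRootFamily sroot 1 := by
  intro a ha x
  constructor
  · rintro rfl
    exact ⟨isWord_singleton.2 ha, rfl, rfl, rfl⟩
  · rintro ⟨-, -, hlen, hh⟩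
    obtain ⟨b, rfl⟩ := List.length_eq_one_iff.1 hlen
    rw [← hh]
    rfl

lemma droot_isRootFamily : IsRootFamily droot 2 := by
  intro a ha x
  constructor
  · rintro rfl
    refine ⟨isWord_cons.2 ⟨ha, isWord_singleton.2 (by omega)⟩, ?_, rfl, rfl⟩
    rcases ha with rfl | rfl <;> decide
  · rintro ⟨hx, hD, hlen, rfl⟩
    obtain ⟨b, c, rfl⟩ := List.length_eq_two.1 hlen
    have hb := (isWord_cons.1 hx).1
    have hc := isWord_singleton.1 (isWord_cons.1 hx).2
    rcases hb with rfl | rfl <;> rcases hc with rfl | rfl <;>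
      first | rfl | exact absurd hD (by decide)

lemma choose_eq_minWord {ρ : ℕ → List ℕ} {n : ℕ} (hρ : IsRootFamily ρ n) {U : List ℕ}
    (h : ∃ w, (Minimal w ∧ (root w).length = n) ∧ psi w = U) : h.choose = minWord ρ U := by
  obtain ⟨⟨hm, hr⟩, hpsi⟩ := h.choose_spec
  calc h.choose = minWord ρ (psi h.choose) := hm.eq_minWord hρ hr
    _ = minWord ρ U := by rw [hpsi]

lemma srmOf_psi {w : List ℕ} (hw : SRMin w) : srmOf (psi w) = w := by
  rw [srmOf, dif_pos ⟨w, hw, rfl⟩]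
  exact (choose_eq_minWord sroot_isRootFamily _).trans
    (hw.1.eq_minWord sroot_isRootFamily hw.2).symm

lemma drmOf_psi {w : List ℕ} (hw : DRMin w) : drmOf (psi w) = w := by
  rw [drmOf, dif_pos ⟨w, hw, rfl⟩]
  exact (choose_eq_minWord droot_isRootFamily _).trans
    (hw.1.eq_minWord droot_isRootFamily hw.2).symm

lemma srmOf_eq_minWord {U : List ℕ} (hU : IsWord U) (hne : U ≠ []) :
    srmOf U = minWord sroot U := by
  have hw : SRMin (minWord sroot U) :=
    ⟨minimal_minWord sroot_isRootFamily hU hne, length_root_minWord sroot_isRootFamily hU hne⟩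
  simpa only [psi_minWord sroot_isRootFamily hU hne] using srmOf_psi hw

lemma drmOf_eq_minWord {U : List ℕ} (hU : IsWord U) (hne : U ≠ []) :
    drmOf U = minWord droot U := by
  have hw : DRMin (minWord droot U) :=
    ⟨minimal_minWord droot_isRootFamily hU hne, length_root_minWord droot_isRootFamily hU hne⟩
  simpa only [psi_minWord droot_isRootFamily hU hne] using drmOf_psi hw

lemma srmOf_nil : srmOf [] = [] := by
  rw [srmOf, dif_neg]
  rintro ⟨w, hw, hpsi⟩
  have := length_psi w
  rw [hpsi, List.length_nil] at this
  exact hw.1.2.1.ne this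

lemma drmOf_nil : drmOf [] = [] := by
  rw [drmOf, dif_neg]
  rintro ⟨w, hw, hpsi⟩
  have := length_psi w
  rw [hpsi, List.length_nil] at this
  exact hw.1.2.1.ne this

lemma Gs_eq_lastLetters {U : List ℕ} (hU : IsWord U) : Gs U = lastLetters sroot U := by
  rcases eq_or_ne U [] with rfl | hne
  · rw [Gs, srmOf_nil, List.reverse_nil, psi_nil]
    rfl
  · rw [Gs, srmOf_eq_minWord hU hne, psi_reverse_minWord sroot_isRootFamily hU hne]

lemma Gd_eq_lastLetters {U : List ℕ} (hU : IsWord U) : Gd U = lastLetters droot U := by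
  rcases eq_or_ne U [] with rfl | hne
  · rw [Gd, drmOf_nil, List.reverse_nil, psi_nil]
    rfl
  · rw [Gd, drmOf_eq_minWord hU hne, psi_reverse_minWord droot_isRootFamily hU hne]

lemma isWord_Gs {U : List ℕ} (hU : IsWord U) : IsWord (Gs U) := by
  rw [Gs_eq_lastLetters hU]
  exact isWord_lastLetters sroot_isRootFamily hU

lemma Gs_Gs {U : List ℕ} (hU : IsWord U) : Gs (Gs U) = U := by
  rcases eq_or_ne U [] with rfl | hne
  · have h0 : Gs [] = [] := Gs_eq_lastLetters isWord_nil
    rw [h0, h0]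
  have hm := minimal_minWord sroot_isRootFamily hU hne
  have hrev : SRMin (minWord sroot U).reverse := ⟨hm.reverse, by
    rw [root_reverse hm.1, List.length_reverse]
    exact length_root_minWord sroot_isRootFamily hU hne⟩
  rw [Gs, Gs, srmOf_eq_minWord hU hne, srmOf_psi hrev, List.reverse_reverse,
    psi_minWord sroot_isRootFamily hU hne]

end Frontiers

section Pi

lemma reverse_minPrim {a : ℕ} (ha : a = 1 ∨ a = 2) (u : List ℕ) :
    (minPrim u a).reverse = minPrim u.reverse (alternate ((padOnes u).length + 1) a) := by
  rw [minPrim, reverse_ofRuns ha, padOnes_reverse]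
  rfl

lemma getLastD_minPrim {u : List ℕ} (hu : IsWord u) (hne : u ≠ []) {a : ℕ}
    (ha : a = 1 ∨ a = 2) :
    (minPrim u a).getLastD 0 = alternate ((padOnes u).length + 1) a := by
  rw [← headI_reverse, reverse_minPrim ha, headI_minPrim hu.reverse (by simpa using hne)]

/-- What `minPrim (u.reverse ++ E) _` adds to `(minPrim u a).reverse`; it depends on `u`
only through its first letter `b`. -/
def primExtension (b : ℕ) (E : List ℕ) (a : ℕ) : List ℕ :=
  let runs := E ++ if E.getLastD 0 = 1 then [1] else []
  if b = 1 then (ofRuns runs a).tail else ofRuns runs (3 - a)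

lemma isWord_primExtension (b : ℕ) (E : List ℕ) {a : ℕ} (ha : a = 1 ∨ a = 2) :
    IsWord (primExtension b E a) := by
  unfold primExtension
  by_cases hb : b = 1
  · rw [if_pos hb]
    exact (isWord_ofRuns _ ha).tail
  · rw [if_neg hb]
    exact isWord_ofRuns _ (by omega)

lemma primExtension_ne_nil (b : ℕ) {E : List ℕ} (hE : IsWord E) (hne : E ≠ []) (a : ℕ) :
    primExtension b E a ≠ [] := by
  have hsum : 2 ≤ (E ++ if E.getLastD 0 = 1 then [1] else []).sum := by
    obtain ⟨e, E', rfl⟩ := List.exists_cons_of_ne_nil hne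
    have he := (isWord_cons.1 hE).1
    rcases eq_or_ne E' [] with rfl | hE'
    · rcases he with rfl | rfl <;> decide
    · obtain ⟨e', E'', rfl⟩ := List.exists_cons_of_ne_nil hE'
      have he' := (isWord_cons.1 (isWord_cons.1 hE).2).1
      simp only [List.cons_append, List.sum_cons]
      omega
  unfold primExtension
  dsimp only
  rw [← List.length_pos_iff]
  by_cases hb : b = 1
  · rw [if_pos hb, List.length_tail, length_ofRuns]
    omega
  · rw [if_neg hb, length_ofRuns]
    omega

lemma minPrim_reverse_append {u E : List ℕ} (hu : IsWord u) (hune : u ≠ []) (hE : IsWord E)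
    (hEne : E ≠ []) {a : ℕ} (ha : a = 1 ∨ a = 2) :
    minPrim (u.reverse ++ E) ((minPrim u a).getLastD 0) =
      (minPrim u a).reverse ++ primExtension u.headI E a := by
  have hβ := alternate_mem ha ((padOnes u).length + 1)
  set H := (if u.getLastD 0 = 1 then [1] else []) ++ u.reverse
  set K : List ℕ := if u.headI = 1 then [1] else []
  have h₁ : padOnes (u.reverse ++ E) = H ++ (E ++ if E.getLastD 0 = 1 then [1] else []) := by
    rw [padOnes, headI_append (by simpa using hune), headI_reverse, getLastD_append hEne]
    simp only [H, List.append_assoc]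
  have h₂ : padOnes u.reverse = H ++ K := by
    simp only [padOnes, headI_reverse, getLastD_reverse, H, K]
  have hlen : (padOnes u).length = H.length + K.length := by
    rw [← List.length_reverse, padOnes_reverse, h₂, List.length_append]
  have hγ : alternate H.length (alternate ((padOnes u).length + 1) a) =
      alternate (K.length + 1) a := by
    rw [alternate_alternate ha, hlen]
    unfold alternate
    split_ifs <;> omega
  rw [getLastD_minPrim hu hune ha, reverse_minPrim ha, minPrim, minPrim, h₁, h₂,
    ofRuns_append hβ H, ofRuns_append hβ H, List.append_assoc, hγ]
  congr 1
  unfold primExtension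
  dsimp only
  by_cases h : u.headI = 1
  · obtain ⟨e, E', rfl⟩ := List.exists_cons_of_ne_nil hEne
    have he : 1 ≤ e := by rcases (isWord_cons.1 hE).1 with rfl | rfl <;> omega
    have h2 : alternate 2 a = a := rfl
    simp [K, h, h2, ofRuns, ofRuns_cons_of_pos _ _ he]
  · simp [K, h, alternate, ofRuns]

lemma lastLetters_ne_nil (ρ : ℕ → List ℕ) {U : List ℕ} (h : U ≠ []) : lastLetters ρ U ≠ [] := by
  rw [lastLetters_eq_cons ρ h]
  exact List.cons_ne_nil _ _

lemma exists_common_extension {T : List ℕ} (hT : IsWord T) (hne : T ≠ []) {c : ℕ}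
    (hc : c = 1 ∨ c = 2) :
    ∃ E, E ≠ [] ∧ IsWord E ∧
      minWord droot (lastLetters sroot (T ++ [c])) = (minWord sroot (T ++ [c])).reverse ++ E ∧
      minWord sroot (lastLetters sroot T ++ [3 - c]) = (minWord sroot T).reverse ++ E := by
  induction T with
  | nil => exact absurd rfl hne
  | cons a S ih =>
    obtain ⟨ha, hS⟩ := isWord_cons.1 hT
    rcases eq_or_ne S [] with rfl | hSne
    · refine ⟨(minWord sroot [a, 3 - c]).tail, ?_, (isWord_minPrim _ ha).tail, ?_⟩ <;>
        rcases ha with rfl | rfl <;> rcases hc with rfl | rfl <;> decide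
    obtain ⟨E, hEne, hE, hd, hn⟩ := ih hS hSne
    have hSc : IsWord (S ++ [c]) := isWord_append.2 ⟨hS, isWord_singleton.2 hc⟩
    obtain ⟨hu₁, hu₁ne, hh₁, -⟩ := minWord_spec sroot_isRootFamily hSc (by simp)
    obtain ⟨hu₂, hu₂ne, hh₂, -⟩ := minWord_spec sroot_isRootFamily hS hSne
    rw [headI_append hSne] at hh₁
    refine ⟨primExtension S.headI E a, primExtension_ne_nil _ hE hEne a,
      isWord_primExtension _ _ ha, ?_, ?_⟩
    · rw [List.cons_append, lastLetters, minWord_cons sroot (by simp),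
        minWord_cons droot (lastLetters_ne_nil _ (by simp)), hd, ← hh₁]
      exact minPrim_reverse_append hu₁ hu₁ne hE hEne ha
    · rw [lastLetters, List.cons_append, minWord_cons sroot hSne, minWord_cons sroot (by simp), hn,
        ← hh₂]
      exact minPrim_reverse_append hu₂ hu₂ne hE hEne ha

lemma lastLetters_droot_lastLetters_append {T : List ℕ} (hT : IsWord T) {c : ℕ}
    (hc : c = 1 ∨ c = 2) :
    lastLetters droot (lastLetters sroot (T ++ [c])) =
      lastLetters sroot (lastLetters sroot T ++ [3 - c]) := by
  induction T with
  | nil => rcases hc with rfl | rfl <;> decide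
  | cons a S ih =>
    obtain ⟨E, hEne, -, hd, hn⟩ := exists_common_extension hT (List.cons_ne_nil a S) hc
    have h₁ : lastLetters droot (lastLetters sroot (a :: S ++ [c])) =
        E.getLastD 0 :: lastLetters droot (lastLetters sroot (S ++ [c])) := by
      rw [lastLetters_eq_cons droot (lastLetters_ne_nil _ (by simp)), hd, getLastD_append hEne]
      rfl
    have h₂ : lastLetters sroot (lastLetters sroot (a :: S) ++ [3 - c]) =
        E.getLastD 0 :: lastLetters sroot (lastLetters sroot S ++ [3 - c]) := by
      rw [lastLetters_eq_cons sroot (U := lastLetters sroot (a :: S) ++ [3 - c]) (by simp), hn,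
        getLastD_append hEne]
      rfl
    rw [h₁, h₂, ih (isWord_cons.1 hT).2]

lemma Gd_Gs_append {T : List ℕ} (hT : IsWord T) {c : ℕ} (hc : c = 1 ∨ c = 2) :
    Gd (Gs (T ++ [c])) = Gs (Gs T ++ [3 - c]) := by
  have hTc : IsWord (T ++ [c]) := isWord_append.2 ⟨hT, isWord_singleton.2 hc⟩
  have hGT : IsWord (Gs T ++ [3 - c]) :=
    isWord_append.2 ⟨isWord_Gs hT, isWord_singleton.2 (by omega)⟩
  rw [Gd_eq_lastLetters (isWord_Gs hTc), Gs_eq_lastLetters hTc, Gs_eq_lastLetters hGT,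
    Gs_eq_lastLetters hT]
  exact lastLetters_droot_lastLetters_append hT hc

end Pi

/-- Γs(U·X) = Π(Γs(U)·X̄) for X ∈ Σ, and Γd = Π ∘ Γs. -/
theorem gammas_via_pi (U : List ℕ) (hU : IsWord U) :
    (∀ X : ℕ, (X = 1 ∨ X = 2) → Gs (U ++ [X]) = Pp (Gs U ++ [3 - X])) ∧
    Gd U = Pp (Gs U) := by
  refine ⟨fun X hX => ?_, ?_⟩
  · rw [Pp, Gd_Gs_append (isWord_Gs hU) (by omega), Gs_Gs hU, three_sub_three_sub hX]
  · rw [Pp, Gs_Gs hU]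

end CInfWords
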